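/- arXiv:2003.06178 — 2 statements merged into one kernel-verified Lean document; each statement's English description precedes it below -/
import Mathlib

section
/- Let D be a digraph, X a set of vertices, y a vertex not in X, and let P and Q be (X,y)-path-systems in D. Then there is an (X,y)-path-system R in D such that the set of initial vertices of R contains the set of initial vertices of P, and the set of terminal edges of R contains the set of terminal edges of Q. -/
/-!  Common framework: digraphs as edge sets on a vertex type, directed paths,
path-systems, separations, flames and largeness. -/

universe u

variable {V : Type u}

/-- A directed path in the digraph on `V` with edge set `E`, given by its
(nonempty, repetition-free) list of vertices `start :: rest`. -/
structure Dipath (E : Set (V × V)) : Type u where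
  start : V
  rest : List V
  chain : List.Chain (fun a b => (a, b) ∈ E) start rest
  nodup : (start :: rest).Nodup

namespace Dipath

variable {E : Set (V × V)}

/-- The list of vertices of the path. -/
def verts (p : Dipath E) : List V := p.start :: p.rest

/-- The terminal vertex of the path. -/
def last (p : Dipath E) : V := (p.start :: p.rest).getLast (List.cons_ne_nil _ _)

/-- The set of vertices of the path. -/
def support (p : Dipath E) : Set V := {v | v ∈ p.verts}

/-- The internal vertices of the path (all vertices except the first and the last). -/
def internal (p : Dipath E) : Set V := {v | v ∈ p.rest.dropLast}

/-- The list of (directed) edges of the path. -/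
def edges (p : Dipath E) : List (V × V) := p.verts.zip p.rest

/-- The set of edges of the path. -/
def edgeSet (p : Dipath E) : Set (V × V) := {e | e ∈ p.edges}

/-- The last edge of the path, if the path has at least one edge. -/
def lastEdge? (p : Dipath E) : Option (V × V) := p.edges.getLast?

end Dipath

section Defs

variable (E : Set (V × V))

/-- The set of ingoing edges of `v`. -/
def inEdges (v : V) : Set (V × V) := {e ∈ E | e.2 = v}

/-- The set of initial vertices of a set of paths. -/
def initVerts {E : Set (V × V)} (P : Set (Dipath E)) : Set V := Dipath.start '' P

/-- The set of terminal vertices of a set of paths. -/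
def termVerts {E : Set (V × V)} (P : Set (Dipath E)) : Set V := Dipath.last '' P

/-- The set of terminal edges of a set of paths. -/
def termEdges {E : Set (V × V)} (P : Set (Dipath E)) : Set (V × V) :=
  {e | ∃ p ∈ P, p.lastEdge? = some e}

/-- An `(r,v)`-path-system: a set of pairwise internally disjoint directed
paths from `r` to `v`. -/
def IsRVSystem (r v : V) (P : Set (Dipath E)) : Prop :=
  (∀ p ∈ P, p.start = r ∧ p.last = v) ∧
    P.Pairwise fun p q => p.support ∩ q.support ⊆ {r, v}

/-- An `(r,v)`-separation: a set of vertices avoiding `r` and `v` and meeting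
every directed path from `r` to `v`. -/
def IsSeparation (r v : V) (S : Set V) : Prop :=
  r ∉ S ∧ v ∉ S ∧ ∀ p : Dipath E, p.start = r → p.last = v → (p.support ∩ S).Nonempty

/-- A set of paths `P` and a vertex set `S` are orthogonal:  every path of `P`
meets `S` in exactly one vertex and every vertex of `S` lies on a path of `P`. -/
def Orthogonal {E : Set (V × V)} (P : Set (Dipath E)) (S : Set V) : Prop :=
  (∀ p ∈ P, ∃! x, x ∈ p.support ∩ S) ∧ ∀ x ∈ S, ∃ p ∈ P, x ∈ p.support

/-- An Erdős–Menger `(r,v)`-path-system: one orthogonal to some `(r,v)`-separation. -/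
def IsEMSystem (r v : V) (P : Set (Dipath E)) : Prop :=
  IsRVSystem E r v P ∧ ∃ S, IsSeparation E r v S ∧ Orthogonal P S

/-- An Erdős–Menger `(r,v)`-separation: one orthogonal to some `(r,v)`-path-system. -/
def IsEMSeparation (r v : V) (S : Set V) : Prop :=
  IsSeparation E r v S ∧ ∃ P : Set (Dipath E), IsRVSystem E r v P ∧ Orthogonal P S

/-- `𝒢_E(v)` (with root `r`): the collection of edge sets `I` that arise as the set of
terminal edges of an internally disjoint `(r,v)`-path-system in `E`. -/
def GSet (r v : V) : Set (Set (V × V)) :=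
  {I | ∃ P : Set (Dipath E), IsRVSystem E r v P ∧ termEdges P = I}

/-- A vertex-flame (with root `r`): for every `v ≠ r`, the whole in-edge set of `v`
is the terminal edge set of an internally disjoint `(r,v)`-path-system. -/
def IsFlame (r : V) : Prop := ∀ v, v ≠ r → inEdges E v ∈ GSet E r v

/-- `L` is `v`-large with respect to the digraph `E` rooted at `r`: `L` contains `rv`
whenever `E` does, and some Erdős–Menger `(r,v)`-path-system of `E - rv` lies in `L`. -/
def VLarge (r : V) (L : Set (V × V)) (v : V) : Prop :=
  ((r, v) ∈ E → (r, v) ∈ L) ∧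
    ∃ P : Set (Dipath (E \ {(r, v)})),
      IsEMSystem (E \ {(r, v)}) r v P ∧ ∀ p ∈ P, p.edgeSet ⊆ L

/-- `L` is large with respect to the digraph `E` rooted at `r`. -/
def Large (r : V) (L : Set (V × V)) : Prop := ∀ v, v ≠ r → VLarge E r L v

/-- An `(X,Y)`-path: from `X` to `Y`, internally disjoint from `X ∪ Y`. -/
def IsXYPath (X Y : Set V) (p : Dipath E) : Prop :=
  p.start ∈ X ∧ p.last ∈ Y ∧ ∀ w ∈ p.internal, w ∉ X ∪ Y

/-- An `(X,Y)`-path-system: pairwise disjoint `(X,Y)`-paths. -/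
def IsXYSystem (X Y : Set V) (P : Set (Dipath E)) : Prop :=
  (∀ p ∈ P, IsXYPath E X Y p) ∧ P.Pairwise fun p q => Disjoint p.support q.support

/-- `X` is joinable to `Y`: some `(X,Y)`-path-system covers `X` with its initial vertices. -/
def Joinable (X Y : Set V) : Prop :=
  ∃ P : Set (Dipath E), IsXYSystem E X Y P ∧ initVerts P = X

/-- `X` is incompressible to `Y`: `X` is joinable to `Y` and every witnessing
path-system covers `Y` with its terminal vertices. -/
def Incompressible (X Y : Set V) : Prop :=
  Joinable E X Y ∧
    ∀ P : Set (Dipath E), IsXYSystem E X Y P → initVerts P = X → termVerts P = Y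

/-- An `(X,Y)`-separation: a vertex set meeting every `(X,Y)`-path. -/
def IsXYSeparation (X Y : Set V) (S : Set V) : Prop :=
  ∀ p : Dipath E, IsXYPath E X Y p → (p.support ∩ S).Nonempty

/-- An Erdős–Menger `(X,Y)`-separation: one orthogonal to some `(X,Y)`-path-system. -/
def IsEMXYSeparation (X Y : Set V) (S : Set V) : Prop :=
  IsXYSeparation E X Y S ∧ ∃ P : Set (Dipath E), IsXYSystem E X Y P ∧ Orthogonal P S

/-- `X'` is `(X,Y)`-finitely extendable: every `O` with `X' ⊆ O ⊆ X` and `O \ X'`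
finite is joinable to `Y`. -/
def FinExtendable (X Y X' : Set V) : Prop :=
  X' ⊆ X ∧ ∀ O, X' ⊆ O → O ⊆ X → (O \ X').Finite → Joinable E O Y

/-- `S` separates the vertex `y` from `r`:  every directed path from `r` to `y` meets `S`. -/
def SeparatesFrom (r : V) (S : Set V) (y : V) : Prop :=
  ∀ p : Dipath E, p.start = r → p.last = y → (p.support ∩ S).Nonempty

/-- An `(X,y)`-path: from a vertex of `X` to `y`, internally disjoint from `X`. -/
def IsXyPath (X : Set V) (y : V) (p : Dipath E) : Prop :=
  p.start ∈ X ∧ p.last = y ∧ ∀ w ∈ p.internal, w ∉ X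

/-- An `(X,y)`-path-system: `(X,y)`-paths, pairwise disjoint except possibly at `y`. -/
def IsXySystem (X : Set V) (y : V) (P : Set (Dipath E)) : Prop :=
  (∀ p ∈ P, IsXyPath E X y p) ∧ P.Pairwise fun p q => p.support ∩ q.support ⊆ {y}

/-- An `(r,S)`-path: from `r` to a vertex of `S`, internally disjoint from `S`. -/
def IsRSPath (r : V) (S : Set V) (p : Dipath E) : Prop :=
  p.start = r ∧ p.last ∈ S ∧ ∀ w ∈ p.internal, w ∉ S

/-- An `(r,S)`-path-system: `(r,S)`-paths, pairwise disjoint apart from `r`. -/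
def IsRSSystem (r : V) (S : Set V) (P : Set (Dipath E)) : Prop :=
  (∀ p ∈ P, IsRSPath E r S p) ∧ P.Pairwise fun p q => p.support ∩ q.support ⊆ {r}

/-- `E` is a `G`-quasi-flame (with root `r`): for every `v ≠ r`, every set `I` of
ingoing edges of `v` with `I \ inEdges G v` finite lies in `𝒢_E(v)`. -/
def QuasiFlame (r : V) (G : Set (V × V)) : Prop :=
  ∀ v, v ≠ r → ∀ I, I ⊆ inEdges E v → (I \ inEdges G v).Finite → I ∈ GSet E r v

/-- The local connectivity `κ_E(r,v)`: the maximum size of an internally disjoint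
`(r,v)`-path-system. -/
noncomputable def kappa (r v : V) : ℕ :=
  sSup {n | ∃ P : Set (Dipath E), IsRVSystem E r v P ∧ P.Finite ∧ P.ncard = n}

end Defs

/-!
Each path `p` of `P` is followed up to the first vertex `sw p` at which it can switch onto `Q`:
a vertex on a path of `Q` such that no path of `Q` through it meets, after it, a vertex other
than `y` that is swept by the initial segments of the paths of `P`. These segments depend on the
switching vertices themselves, so the switching vertices come from a fixed point of a monotone
operator on vertex sets; no finiteness is needed. Splicing every `p` at `sw p` onto a path of `Q`
through `sw p`, and keeping the paths of `Q` that avoid the swept vertices, gives `R`.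
-/

theorem List.getLast?_zip_tail_cons {α : Type*} (a : α) {m : List α} (hm : 2 ≤ m.length) :
    ((a :: m).zip m).getLast? = (m.zip m.tail).getLast? := by
  match m, hm with
  | _ :: _ :: _, _ => rfl

theorem List.getLast?_zip_tail_append {α : Type*} (l : List α) {c : List α} (hc : 2 ≤ c.length) :
    ((l ++ c).zip (l ++ c).tail).getLast? = (c.zip c.tail).getLast? := by
  induction l with
  | nil => rfl
  | cons a l ih =>
    rw [List.cons_append, List.tail_cons, List.getLast?_zip_tail_cons a (by rw [List.length_append]; omega), ih]

namespace Dipath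

variable {E : Set (V × V)} {p q : Dipath E} {u v w : V}

theorem nodup_verts (p : Dipath E) : p.verts.Nodup := p.nodup

theorem isChain_verts (p : Dipath E) : p.verts.IsChain (fun a b => (a, b) ∈ E) := p.chain

theorem start_mem (p : Dipath E) : p.start ∈ p.support := List.mem_cons_self

theorem last_mem (p : Dipath E) : p.last ∈ p.support := List.getLast_mem _

theorem mem_internal_iff : v ∈ p.internal ↔ v ∈ p.support ∧ v ≠ p.start ∧ v ≠ p.last := by
  obtain ⟨a, r, -, hnd⟩ := p
  rcases List.eq_nil_or_concat r with rfl | ⟨D, b, rfl⟩ <;> grind [internal, support, verts, last]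

theorem getLast?_verts (p : Dipath E) : p.verts.getLast? = some p.last :=
  List.getLast?_eq_some_getLast _

variable [DecidableEq V]

def before (p : Dipath E) (v : V) : List V := p.verts.take (p.verts.idxOf v)

def upTo (p : Dipath E) (v : V) : List V := p.verts.take (p.verts.idxOf v + 1)

def after (p : Dipath E) (v : V) : List V := p.verts.drop (p.verts.idxOf v + 1)

theorem idxOf_start (p : Dipath E) : p.verts.idxOf p.start = 0 := List.idxOf_cons_self

theorem idxOf_last (p : Dipath E) : p.verts.idxOf p.last = p.verts.length - 1 := by
  have h := p.nodup_verts.idxOf_getElem (p.verts.length - 1) (by simp [verts])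
  rwa [last, List.getLast_eq_getElem]

theorem mem_before_iff (hu : u ∈ p.support) :
    u ∈ p.before v ↔ p.verts.idxOf u < p.verts.idxOf v :=
  List.mem_take_iff_idxOf_lt hu

theorem mem_upTo_iff (hu : u ∈ p.support) :
    u ∈ p.upTo v ↔ p.verts.idxOf u ≤ p.verts.idxOf v :=
  (List.mem_take_iff_idxOf_lt hu).trans Nat.lt_succ_iff

theorem verts_eq_upTo_append_after (p : Dipath E) (v : V) : p.verts = p.upTo v ++ p.after v :=
  (List.take_append_drop _ _).symm

theorem mem_after_iff (hu : u ∈ p.support) :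
    u ∈ p.after v ↔ p.verts.idxOf v < p.verts.idxOf u := by
  have hu' : u ∈ p.upTo v ++ p.after v := by rw [← verts_eq_upTo_append_after]; exact hu
  have hdisj : (p.upTo v).Disjoint (p.after v) := List.disjoint_take_drop p.nodup_verts le_rfl
  rw [← not_le, ← mem_upTo_iff hu]
  exact ⟨fun h h' => hdisj h' h, (List.mem_append.1 hu').resolve_left⟩

theorem mem_support_of_mem_upTo (h : u ∈ p.upTo v) : u ∈ p.support := List.mem_of_mem_take h

theorem mem_support_of_mem_after (h : u ∈ p.after v) : u ∈ p.support := List.mem_of_mem_drop h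

theorem self_mem_upTo (hv : v ∈ p.support) : v ∈ p.upTo v := (mem_upTo_iff hv).2 le_rfl

theorem upTo_eq_before_append (hv : v ∈ p.support) : p.upTo v = p.before v ++ [v] := by
  rw [upTo, before, List.take_add_one, List.getElem?_idxOf hv]; rfl

theorem after_eq_nil_iff (hv : v ∈ p.support) : p.after v = [] ↔ v = p.last := by
  rw [after, List.drop_eq_nil_iff, ← List.idxOf_inj (y := p.last) hv, idxOf_last]
  have := List.idxOf_lt_length_of_mem hv
  omega

theorem eq_or_mem_after_or_mem_after (hu : u ∈ p.support) (hv : v ∈ p.support) :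
    u = v ∨ u ∈ p.after v ∨ v ∈ p.after u := by
  rw [mem_after_iff hu, mem_after_iff hv, ← List.idxOf_inj (y := v) hu]
  omega

theorem ne_last_of_mem_after (h : u ∈ p.after v) : v ≠ p.last := by
  rintro rfl
  rw [(after_eq_nil_iff p.last_mem).2 rfl] at h
  exact List.not_mem_nil h

theorem eq_last_of_last_mem_upTo (hv : v ∈ p.support) (h : p.last ∈ p.upTo v) : v = p.last := by
  rw [mem_upTo_iff p.last_mem, idxOf_last] at h
  rw [← List.idxOf_inj (y := p.last) hv, idxOf_last]
  have := List.idxOf_lt_length_of_mem hv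
  omega

theorem mem_before_of_mem_upTo (hu : u ∈ p.upTo v) (hw : w ∈ p.before u) : w ∈ p.before v := by
  have hws : w ∈ p.support := List.mem_of_mem_take hw
  rw [mem_before_iff hws] at hw ⊢
  exact hw.trans_le ((mem_upTo_iff (mem_support_of_mem_upTo hu)).1 hu)

theorem getLast?_upTo (hv : v ∈ p.support) : (p.upTo v).getLast? = some v := by
  rw [upTo_eq_before_append hv, List.getLast?_concat]

theorem verts_eq_before_append (hv : v ∈ p.support) : p.verts = p.before v ++ v :: p.after v := by
  rw [verts_eq_upTo_append_after p v, upTo_eq_before_append hv, List.append_assoc]; rfl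

theorem exists_first {C : V → Prop} (h : ∃ v ∈ p.support, C v) :
    ∃ v ∈ p.support, C v ∧ ∀ w ∈ p.before v, ¬ C w := by
  classical
  obtain ⟨v, hv, hmin⟩ := (p.verts.toFinset.filter C).exists_min_image p.verts.idxOf
    (by obtain ⟨v, hv, hCv⟩ := h; exact ⟨v, Finset.mem_filter.2 ⟨List.mem_toFinset.2 hv, hCv⟩⟩)
  simp only [Finset.mem_filter, List.mem_toFinset] at hv hmin
  refine ⟨v, hv.1, hv.2, fun w hw hCw => ?_⟩
  have hws : w ∈ p.support := List.mem_of_mem_take hw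
  exact (mem_before_iff hws).1 hw |>.not_ge (hmin w ⟨hws, hCw⟩)

theorem exists_last {C : V → Prop} (h : ∃ v ∈ p.support, C v) :
    ∃ v ∈ p.support, C v ∧ ∀ w ∈ p.after v, ¬ C w := by
  classical
  obtain ⟨v, hv, hmax⟩ := (p.verts.toFinset.filter C).exists_max_image p.verts.idxOf
    (by obtain ⟨v, hv, hCv⟩ := h; exact ⟨v, Finset.mem_filter.2 ⟨List.mem_toFinset.2 hv, hCv⟩⟩)
  simp only [Finset.mem_filter, List.mem_toFinset] at hv hmax
  refine ⟨v, hv.1, hv.2, fun w hw hCw => ?_⟩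
  have hws : w ∈ p.support := List.mem_of_mem_drop hw
  exact (mem_after_iff hws).1 hw |>.not_ge (hmax w ⟨hws, hCw⟩)

def Splicable (p q : Dipath E) (v : V) : Prop :=
  v ∈ p.support ∧ v ∈ q.support ∧ (p.upTo v).Disjoint (q.after v)

theorem Splicable.isChain (h : Splicable p q v) :
    (p.upTo v ++ q.after v).IsChain (fun a b => (a, b) ∈ E) := by
  have hq := List.isChain_append.1 (q.verts_eq_upTo_append_after v ▸ q.isChain_verts)
  refine List.isChain_append.2 ⟨p.isChain_verts.take _, hq.2.1, ?_⟩
  rw [getLast?_upTo h.1, ← getLast?_upTo h.2.1]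
  exact hq.2.2

theorem Splicable.nodup (h : Splicable p q v) : (p.upTo v ++ q.after v).Nodup :=
  (p.nodup_verts.sublist (List.take_sublist _ _)).append
    (q.nodup_verts.sublist (List.drop_sublist _ _)) h.2.2

open Classical in
/-- Junk value `p` when the spliced vertex list is not a path. -/
noncomputable def splice (p q : Dipath E) (v : V) : Dipath E :=
  if h : Splicable p q v then
    ⟨p.start, p.rest.take (p.verts.idxOf v) ++ q.after v, h.isChain, h.nodup⟩
  else p

theorem verts_splice (h : Splicable p q v) : (p.splice q v).verts = p.upTo v ++ q.after v := by
  rw [splice, dif_pos h]; rfl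

theorem start_splice (h : Splicable p q v) : (p.splice q v).start = p.start := by
  rw [splice, dif_pos h]

theorem mem_support_splice (h : Splicable p q v) :
    w ∈ (p.splice q v).support ↔ w ∈ p.upTo v ∨ w ∈ q.after v := by
  change w ∈ (p.splice q v).verts ↔ _
  rw [verts_splice h, List.mem_append]

theorem last_splice (h : Splicable p q v) : (p.splice q v).last = q.last := by
  apply Option.some.inj
  rw [← getLast?_verts, ← getLast?_verts, verts_splice h, q.verts_eq_upTo_append_after v,
    List.getLast?_append, List.getLast?_append, getLast?_upTo h.1, getLast?_upTo h.2.1]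

theorem internal_splice_subset (h : Splicable p q v) (hl : p.last = q.last) :
    (p.splice q v).internal ⊆ p.internal ∪ q.internal := by
  intro w hw
  rw [mem_internal_iff, mem_support_splice h, start_splice h, last_splice h] at hw
  obtain ⟨hw | hw, hws, hwl⟩ := hw
  · exact Or.inl (mem_internal_iff.2 ⟨mem_support_of_mem_upTo hw, hws, hl ▸ hwl⟩)
  · refine Or.inr (mem_internal_iff.2 ⟨mem_support_of_mem_after hw, ?_, hwl⟩)
    rintro rfl
    have := (mem_after_iff q.start_mem).1 hw
    rw [idxOf_start] at this
    exact Nat.not_lt_zero _ this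

theorem lastEdge?_splice (h : Splicable p q v) (hv : v ≠ q.last) :
    (p.splice q v).lastEdge? = q.lastEdge? := by
  have hc : 2 ≤ (v :: q.after v).length := by
    have := List.length_pos_iff.2 fun h' => hv ((after_eq_nil_iff h.2.1).1 h')
    simp only [List.length_cons]
    omega
  have hpv : (p.splice q v).verts = p.before v ++ v :: q.after v := by
    rw [verts_splice h, upTo_eq_before_append h.1, List.append_assoc]; rfl
  change ((p.splice q v).verts.zip (p.splice q v).verts.tail).getLast? =
    (q.verts.zip q.verts.tail).getLast?
  rw [hpv, verts_eq_before_append h.2.1, List.getLast?_zip_tail_append _ hc,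
    List.getLast?_zip_tail_append _ hc]

end Dipath

section Switching

variable {E : Set (V × V)} [DecidableEq V] {y v : V} {P Q : Set (Dipath E)} {T T' : Set V}

open Dipath

/-- `T` stands for the vertices in use by the paths of `P`. -/
def CanSwitch (Q : Set (Dipath E)) (y : V) (T : Set V) (v : V) : Prop :=
  (∃ q ∈ Q, v ∈ q.support) ∧ ∀ q ∈ Q, v ∈ q.support → ∀ u ∈ q.after v, u ∈ T → u = y

theorem CanSwitch.anti (hT : T ⊆ T') (hv : CanSwitch Q y T' v) : CanSwitch Q y T v :=
  ⟨hv.1, fun q hq hvq u hu huT => hv.2 q hq hvq u hu (hT huT)⟩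

theorem canSwitch_of_forall_last_eq (hQy : ∀ q ∈ Q, q.last = y) (hQ : Q.Nonempty) :
    CanSwitch Q y T y := by
  obtain ⟨q₀, hq₀⟩ := hQ
  refine ⟨⟨q₀, hq₀, hQy q₀ hq₀ ▸ q₀.last_mem⟩, fun q hq _ u hu _ => ?_⟩
  rw [← hQy q hq, (after_eq_nil_iff q.last_mem).2 rfl] at hu
  exact absurd hu List.not_mem_nil

def sweep (P : Set (Dipath E)) (sw : Dipath E → V) : Set V := {u | ∃ p ∈ P, u ∈ p.upTo (sw p)}

def IsSwitching (P Q : Set (Dipath E)) (y : V) (sw : Dipath E → V) : Prop :=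
  ∀ p ∈ P, sw p ∈ p.support ∧ CanSwitch Q y (sweep P sw) (sw p) ∧
    ∀ w ∈ p.before (sw p), ¬ CanSwitch Q y (sweep P sw) w

def reachBeforeSwitch (P Q : Set (Dipath E)) (y : V) (T : Set V) : Set V :=
  {u | ∃ p ∈ P, u ∈ p.support ∧ ∀ w ∈ p.before u, ¬ CanSwitch Q y T w}

theorem monotone_reachBeforeSwitch : Monotone (reachBeforeSwitch P Q y) :=
  fun _ _ hT _ ⟨p, hp, hu, hfirst⟩ => ⟨p, hp, hu, fun w hw hsw => hfirst w hw (hsw.anti hT)⟩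

theorem exists_isSwitching (hPy : ∀ p ∈ P, p.last = y) (hQy : ∀ q ∈ Q, q.last = y)
    (hQ : Q.Nonempty) : ∃ sw, IsSwitching P Q y sw := by
  let F : Set V →o Set V := ⟨reachBeforeSwitch P Q y, monotone_reachBeforeSwitch⟩
  set T := F.lfp
  have hT : reachBeforeSwitch P Q y T = T := F.map_lfp
  have hfirst : ∀ p, ∃ v, p ∈ P →
      v ∈ p.support ∧ CanSwitch Q y T v ∧ ∀ w ∈ p.before v, ¬ CanSwitch Q y T w := by
    intro p
    by_cases hp : p ∈ P
    · have hlast : CanSwitch Q y T p.last := by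
        rw [hPy p hp]; exact canSwitch_of_forall_last_eq hQy hQ
      obtain ⟨v, hv⟩ := p.exists_first ⟨p.last, p.last_mem, hlast⟩
      exact ⟨v, fun _ => hv⟩
    · exact ⟨y, fun h => absurd h hp⟩
  choose sw hsw using hfirst
  have hsweep : sweep P sw = T := by
    ext u
    constructor
    · rintro ⟨p, hp, hu⟩
      rw [← hT]
      exact ⟨p, hp, mem_support_of_mem_upTo hu,
        fun w hw => (hsw p hp).2.2 w (mem_before_of_mem_upTo hu hw)⟩
    · intro hu
      rw [← hT] at hu
      obtain ⟨p, hp, hus, hfirst⟩ := hu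
      refine ⟨p, hp, (mem_upTo_iff hus).2 (not_lt.1 fun hlt => ?_)⟩
      exact hfirst (sw p) ((mem_before_iff (hsw p hp).1).2 hlt) (hsw p hp).2.1
  exact ⟨sw, fun p hp => hsweep ▸ hsw p hp⟩

end Switching

section Reroute

variable {E : Set (V × V)} {X : Set V} {y w : V} {P Q : Set (Dipath E)} {p p₁ p₂ q : Dipath E}

theorem IsXySystem.eq_of_mem_support (hP : IsXySystem E X y P) (hp : p ∈ P) (hq : q ∈ P)
    (hwp : w ∈ p.support) (hwq : w ∈ q.support) (hw : w ≠ y) : p = q :=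
  by_contra fun hne => hw (hP.2 hp hq hne ⟨hwp, hwq⟩)

variable [DecidableEq V] {sw : Dipath E → V} {qp : Dipath E → Dipath E}

open Dipath

theorem IsXyPath.splice {v : V} (hp : IsXyPath E X y p) (hq : IsXyPath E X y q)
    (h : Splicable p q v) : IsXyPath E X y (p.splice q v) := by
  refine ⟨start_splice h ▸ hp.1, (last_splice h).trans hq.2.1, fun w hw => ?_⟩
  rcases internal_splice_subset h (hp.2.1.trans hq.2.1.symm) hw with hw | hw
  exacts [hp.2.2 w hw, hq.2.2 w hw]

def reroute (P Q : Set (Dipath E)) (y : V) (sw : Dipath E → V) (qp : Dipath E → Dipath E) :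
    Set (Dipath E) :=
  (fun p => p.splice (qp p) (sw p)) '' P ∪ {q ∈ Q | ∀ u ∈ q.support, u ∈ sweep P sw → u = y}

namespace IsSwitching

theorem eq_of_mem_after (hsw : IsSwitching P Q y sw) (hp : p ∈ P) (hq : q ∈ Q)
    (hvq : sw p ∈ q.support) (hw : w ∈ q.after (sw p)) (hwT : w ∈ sweep P sw) : w = y :=
  (hsw p hp).2.1.2 q hq hvq w hw hwT

theorem splicable (hsw : IsSwitching P Q y sw) (hqp : ∀ p ∈ P, qp p ∈ Q ∧ sw p ∈ (qp p).support)
    (hP : IsXySystem E X y P) (hQ : IsXySystem E X y Q) (hp : p ∈ P) :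
    Splicable p (qp p) (sw p) := by
  refine ⟨(hsw p hp).1, (hqp p hp).2, fun w hwp hwq => ?_⟩
  have hwy : w = y := hsw.eq_of_mem_after hp (hqp p hp).1 (hqp p hp).2 hwq ⟨p, hp, hwp⟩
  have hsw_ne : sw p ≠ y := (hQ.1 _ (hqp p hp).1).2.1 ▸ ne_last_of_mem_after hwq
  rw [hwy, ← (hP.1 p hp).2.1] at hwp
  exact hsw_ne ((eq_last_of_last_mem_upTo (hsw p hp).1 hwp).trans (hP.1 p hp).2.1)

theorem eq_of_sw_mem_support (hsw : IsSwitching P Q y sw) (hP : IsXySystem E X y P) (hp₁ : p₁ ∈ P)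
    (hp₂ : p₂ ∈ P) (hq : q ∈ Q) (h₁ : sw p₁ ∈ q.support) (h₂ : sw p₂ ∈ q.support)
    (hy₁ : sw p₁ ≠ y) (hy₂ : sw p₂ ≠ y) : p₁ = p₂ := by
  have hswept : ∀ p ∈ P, sw p ∈ sweep P sw := fun p hp => ⟨p, hp, self_mem_upTo (hsw p hp).1⟩
  have heq : sw p₁ = sw p₂ := by
    rcases eq_or_mem_after_or_mem_after h₁ h₂ with h | h | h
    · exact h
    · exact absurd (hsw.eq_of_mem_after hp₂ hq h₂ h (hswept p₁ hp₁)) hy₁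
    · exact absurd (hsw.eq_of_mem_after hp₁ hq h₁ h (hswept p₂ hp₂)) hy₂
  exact hP.eq_of_mem_support hp₁ hp₂ (hsw p₁ hp₁).1 (heq ▸ (hsw p₂ hp₂).1) hy₁

theorem eq_of_mem_splice_of_mem_splice (hsw : IsSwitching P Q y sw)
    (hqp : ∀ p ∈ P, qp p ∈ Q ∧ sw p ∈ (qp p).support) (hP : IsXySystem E X y P)
    (hQ : IsXySystem E X y Q) (hp₁ : p₁ ∈ P) (hp₂ : p₂ ∈ P)
    (hw₁ : w ∈ (p₁.splice (qp p₁) (sw p₁)).support) (hw₂ : w ∈ (p₂.splice (qp p₂) (sw p₂)).support)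
    (hw : w ≠ y) : p₁ = p₂ := by
  rw [mem_support_splice (hsw.splicable hqp hP hQ hp₁)] at hw₁
  rw [mem_support_splice (hsw.splicable hqp hP hQ hp₂)] at hw₂
  rcases hw₁ with h₁ | h₁ <;> rcases hw₂ with h₂ | h₂
  · exact hP.eq_of_mem_support hp₁ hp₂ (mem_support_of_mem_upTo h₁) (mem_support_of_mem_upTo h₂) hw
  · exact absurd (hsw.eq_of_mem_after hp₂ (hqp p₂ hp₂).1 (hqp p₂ hp₂).2 h₂ ⟨p₁, hp₁, h₁⟩) hw
  · exact absurd (hsw.eq_of_mem_after hp₁ (hqp p₁ hp₁).1 (hqp p₁ hp₁).2 h₁ ⟨p₂, hp₂, h₂⟩) hw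
  · have hq : qp p₁ = qp p₂ := hQ.eq_of_mem_support (hqp p₁ hp₁).1 (hqp p₂ hp₂).1
      (mem_support_of_mem_after h₁) (mem_support_of_mem_after h₂) hw
    have hlast : ∀ p ∈ P, (qp p).last = y := fun p hp => (hQ.1 _ (hqp p hp).1).2.1
    exact hsw.eq_of_sw_mem_support hP hp₁ hp₂ (hqp p₂ hp₂).1 (hq ▸ (hqp p₁ hp₁).2) (hqp p₂ hp₂).2
      (hlast p₁ hp₁ ▸ ne_last_of_mem_after h₁) (hlast p₂ hp₂ ▸ ne_last_of_mem_after h₂)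

theorem eq_of_mem_splice_of_mem_untouched (hsw : IsSwitching P Q y sw)
    (hqp : ∀ p ∈ P, qp p ∈ Q ∧ sw p ∈ (qp p).support) (hP : IsXySystem E X y P)
    (hQ : IsXySystem E X y Q) (hp : p ∈ P) (hq : q ∈ Q)
    (hqT : ∀ u ∈ q.support, u ∈ sweep P sw → u = y)
    (hwp : w ∈ (p.splice (qp p) (sw p)).support) (hwq : w ∈ q.support) : w = y := by
  rw [mem_support_splice (hsw.splicable hqp hP hQ hp)] at hwp
  rcases hwp with h | h
  · exact hqT w hwq ⟨p, hp, h⟩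
  · by_contra hw
    obtain rfl : qp p = q :=
      hQ.eq_of_mem_support (hqp p hp).1 hq (mem_support_of_mem_after h) hwq hw
    have hne : sw p ≠ y := (hQ.1 _ hq).2.1 ▸ ne_last_of_mem_after h
    exact hne (hqT _ (hqp p hp).2 ⟨p, hp, self_mem_upTo (hsw p hp).1⟩)

theorem isXySystem_reroute (hsw : IsSwitching P Q y sw)
    (hqp : ∀ p ∈ P, qp p ∈ Q ∧ sw p ∈ (qp p).support) (hP : IsXySystem E X y P)
    (hQ : IsXySystem E X y Q) : IsXySystem E X y (reroute P Q y sw qp) := by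
  refine ⟨?_, ?_⟩
  · rintro r (⟨p, hp, rfl⟩ | ⟨hq, -⟩)
    · exact (hP.1 p hp).splice (hQ.1 _ (hqp p hp).1) (hsw.splicable hqp hP hQ hp)
    · exact hQ.1 r hq
  · rintro a ha b hb hab w ⟨hwa, hwb⟩
    by_contra hw
    rcases ha with ⟨p₁, hp₁, rfl⟩ | ⟨ha, haT⟩ <;> rcases hb with ⟨p₂, hp₂, rfl⟩ | ⟨hb, hbT⟩
    · exact hab (by rw [hsw.eq_of_mem_splice_of_mem_splice hqp hP hQ hp₁ hp₂ hwa hwb hw])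
    · exact hw (hsw.eq_of_mem_splice_of_mem_untouched hqp hP hQ hp₁ hb hbT hwa hwb)
    · exact hw (hsw.eq_of_mem_splice_of_mem_untouched hqp hP hQ hp₂ ha haT hwb hwa)
    · exact hw (hQ.2 ha hb hab ⟨hwa, hwb⟩)

theorem initVerts_subset_reroute (hsw : IsSwitching P Q y sw)
    (hqp : ∀ p ∈ P, qp p ∈ Q ∧ sw p ∈ (qp p).support) (hP : IsXySystem E X y P)
    (hQ : IsXySystem E X y Q) : initVerts P ⊆ initVerts (reroute P Q y sw qp) := by
  rintro _ ⟨p, hp, rfl⟩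
  exact ⟨_, Or.inl ⟨p, hp, rfl⟩, start_splice (hsw.splicable hqp hP hQ hp)⟩

/-- A path `q` of `Q` meeting the swept vertices is not in the rerouted system, but its last
swept vertex `u ≠ y` is the switching vertex of the path of `P` sweeping it (otherwise switching
at `u` would have been possible earlier), so that path is rerouted along the end of `q`. -/
theorem termEdges_subset_reroute (hsw : IsSwitching P Q y sw)
    (hqp : ∀ p ∈ P, qp p ∈ Q ∧ sw p ∈ (qp p).support) (hP : IsXySystem E X y P)
    (hQ : IsXySystem E X y Q) : termEdges Q ⊆ termEdges (reroute P Q y sw qp) := by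
  rintro e ⟨q, hq, he⟩
  by_cases hqT : ∀ u ∈ q.support, u ∈ sweep P sw → u = y
  · exact ⟨q, Or.inr ⟨hq, hqT⟩, he⟩
  push Not at hqT
  obtain ⟨u, huq, ⟨⟨p, hp, hup⟩, hu⟩, hlast⟩ :=
    q.exists_last (C := fun u => u ∈ sweep P sw ∧ u ≠ y) hqT
  obtain rfl : u = sw p := by
    by_contra hne
    rw [upTo_eq_before_append (hsw p hp).1, List.mem_append, List.mem_singleton] at hup
    refine (hsw p hp).2.2 u (hup.resolve_right hne)
      ⟨⟨q, hq, huq⟩, fun q' hq' huq' u' hu' hu'T => ?_⟩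
    obtain rfl : q' = q := hQ.eq_of_mem_support hq' hq huq' huq hu
    exact by_contra fun hu'y => hlast u' hu' ⟨hu'T, hu'y⟩
  obtain rfl : qp p = q := hQ.eq_of_mem_support (hqp p hp).1 hq (hqp p hp).2 huq hu
  refine ⟨p.splice (qp p) (sw p), Or.inl ⟨p, hp, rfl⟩, ?_⟩
  rw [lastEdge?_splice (hsw.splicable hqp hP hQ hp) ((hQ.1 _ hq).2.1 ▸ hu), he]

end IsSwitching

end Reroute

theorem stmt2_general {V : Type u} (E : Set (V × V)) (X : Set V) (y : V)
    (P Q : Set (Dipath E)) (hP : IsXySystem E X y P) (hQ : IsXySystem E X y Q) :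
    ∃ R : Set (Dipath E), IsXySystem E X y R ∧
      initVerts P ⊆ initVerts R ∧ termEdges Q ⊆ termEdges R := by
  classical
  rcases Q.eq_empty_or_nonempty with rfl | hQne
  · exact ⟨P, hP, subset_rfl, fun e ⟨q, hq, _⟩ => absurd hq (Set.notMem_empty q)⟩
  obtain ⟨sw, hsw⟩ := exists_isSwitching (fun p hp => (hP.1 p hp).2.1)
    (fun q hq => (hQ.1 q hq).2.1) hQne
  choose! qp hqp using fun p hp => (hsw p hp).2.1.1
  exact ⟨reroute P Q y sw qp, hsw.isXySystem_reroute hqp hP hQ,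
    hsw.initVerts_subset_reroute hqp hP hQ, hsw.termEdges_subset_reroute hqp hP hQ⟩

/-- **Corollary of Pym's theorem.** Given two `(X,y)`-path-systems `P` and `Q`, there is
an `(X,y)`-path-system `R` whose initial vertices include those of `P` and whose
terminal edges include those of `Q`. -/
theorem stmt2 {V : Type u} (E : Set (V × V)) (X : Set V) (y : V) (hy : y ∉ X)
    (P Q : Set (Dipath E)) (hP : IsXySystem E X y P) (hQ : IsXySystem E X y Q) :
    ∃ R : Set (Dipath E), IsXySystem E X y R ∧
      initVerts P ⊆ initVerts R ∧ termEdges Q ⊆ termEdges R :=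
  stmt2_general E X y P Q hP hQ
end

section
/- Let D be a rooted digraph with root r, let x be a vertex distinct from r, and let 𝒮 be a nonempty collection of subsets of V(D)−r such that every S ∈ 𝒮 separates x from r. Then the set of those vertices s ∈ ⋃𝒮 that are separated from r by every member of 𝒮 also separates x from r. -/
/-!  Common framework: digraphs as edge sets on a vertex type, directed paths,
path-systems, separations, flames and largeness. -/

universe u

variable {V : Type u}

/-! Let `A` be the set of vertices separated from `r` by every member of `𝒮`. If `y ∈ A`
lies outside `⋃ 𝒮` and `uy` is an edge, then `u ∈ A`, since an `(r,u)`-path avoiding some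
`S ∈ 𝒮` would extend along `uy` (or be cut at `y`) to an `(r,y)`-path avoiding `S`. The root
is not in `A` (no `S ∈ 𝒮` contains it) while `x` is, so walking an `(r,x)`-path backwards
from `x` we must leave `A`, and the vertex of `A` where this happens lies in `⋃ 𝒮`. -/

theorem List.IsChain.exists_mem_inter_of_getLast_mem {α : Type*} {R : α → α → Prop}
    {A B : Set α} (hA : ∀ ⦃u y⦄, R u y → y ∈ A → y ∉ B → u ∈ A) :
    ∀ {a : α} {l : List α}, (a :: l).IsChain R → a ∉ A →
      (a :: l).getLast (List.cons_ne_nil a l) ∈ A → ∃ v ∈ a :: l, v ∈ B ∧ v ∈ A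
  | a, [], _, ha, hlast => absurd hlast ha
  | a, b :: t, hc, ha, hlast => by
    obtain ⟨hab, hbt⟩ := List.isChain_cons_cons.mp hc
    by_cases hbA : b ∈ A
    · by_cases hbB : b ∈ B
      · exact ⟨b, by simp, hbB, hbA⟩
      · exact absurd (hA hab hbA hbB) ha
    · obtain ⟨v, hv, hvB, hvA⟩ := exists_mem_inter_of_getLast_mem hA hbt hbA hlast
      exact ⟨v, List.mem_cons_of_mem a hv, hvB, hvA⟩

namespace Dipath

variable {E : Set (V × V)}

theorem exists_verts_eq {l : List V} (hl : l ≠ []) (hc : l.IsChain fun a b => (a, b) ∈ E)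
    (hn : l.Nodup) : ∃ p : Dipath E, p.verts = l := by
  cases l with
  | nil => exact absurd rfl hl
  | cons a t => exact ⟨⟨a, t, hc, hn⟩, rfl⟩

end Dipath

namespace SeparatesFrom

variable {E : Set (V × V)} {r u y : V} {S : Set V}

theorem exists_mem_of_isChain (h : SeparatesFrom E r S y) {l : List V} (hl : l ≠ [])
    (hc : l.IsChain fun a b => (a, b) ∈ E) (hn : l.Nodup) (hhead : l.head hl = r)
    (hlast : l.getLast hl = y) : ∃ w ∈ l, w ∈ S := by
  obtain ⟨p, rfl⟩ := Dipath.exists_verts_eq hl hc hn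
  exact h p hhead hlast

theorem root_mem (h : SeparatesFrom E r S r) : r ∈ S := by
  simpa using h.exists_mem_of_isChain (List.cons_ne_nil r []) (List.isChain_singleton r)
    (List.nodup_singleton r) rfl rfl

theorem of_edge (h : SeparatesFrom E r S y) (hyS : y ∉ S) (huy : (u, y) ∈ E) :
    SeparatesFrom E r S u := by
  intro q hq hqu
  by_cases hy : y ∈ q.support
  · obtain ⟨s, t, hst⟩ := List.append_of_mem hy
    have hpre : s ++ [y] <+: q.verts := ⟨t, by simp [hst]⟩
    obtain ⟨w, hw, hwS⟩ := h.exists_mem_of_isChain (by simp) (q.chain.prefix hpre)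
      (hpre.sublist.nodup q.nodup) (by rw [hpre.head, ← hq]; rfl) List.getLast_concat
    exact ⟨w, hpre.sublist.mem hw, hwS⟩
  · have hc : (q.verts ++ [y]).IsChain fun a b => (a, b) ∈ E :=
      q.chain.append (List.isChain_singleton y) (fun a ha b hb => by
        obtain rfl : y = b := by simpa using hb
        rw [List.getLast?_eq_some_getLast (List.cons_ne_nil _ _), Option.mem_some_iff] at ha
        exact ha ▸ (show (q.last, y) ∈ E from hqu ▸ huy))
    have hn : (q.verts ++ [y]).Nodup :=
      List.nodup_append.mpr ⟨q.nodup, List.nodup_singleton y, fun a ha b hb hab =>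
        hy (by simp_all [Dipath.support])⟩
    obtain ⟨w, hw, hwS⟩ := h.exists_mem_of_isChain (by simp) hc hn
      (by simpa [Dipath.verts] using hq) List.getLast_concat
    rcases List.mem_append.mp hw with hw | hw
    · exact ⟨w, hw, hwS⟩
    · exact absurd (List.mem_singleton.mp hw ▸ hwS) hyS

end SeparatesFrom

theorem stmt12_general {V : Type u} (E : Set (V × V)) (r x : V)
    (𝒮 : Set (Set V)) (hne : 𝒮.Nonempty)
    (h𝒮 : ∀ S ∈ 𝒮, r ∉ S ∧ SeparatesFrom E r S x) :
    SeparatesFrom E r {s | s ∈ ⋃₀ 𝒮 ∧ ∀ S ∈ 𝒮, SeparatesFrom E r S s} x := by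
  set A := {y | ∀ S ∈ 𝒮, SeparatesFrom E r S y}
  have hA : ∀ ⦃u y⦄, (u, y) ∈ E → y ∈ A → y ∉ ⋃₀ 𝒮 → u ∈ A :=
    fun u y huy hyA hyB S hS => (hyA S hS).of_edge (fun hyS => hyB ⟨S, hS, hyS⟩) huy
  have hrA : r ∉ A := fun hrA =>
    let ⟨S, hS⟩ := hne
    (h𝒮 S hS).1 (hrA S hS).root_mem
  intro p hpr hpx
  have hxA : p.last ∈ A := hpx ▸ fun S hS => (h𝒮 S hS).2
  obtain ⟨v, hv, hvB, hvA⟩ := p.chain.exists_mem_inter_of_getLast_mem hA (hpr ▸ hrA) hxA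
  exact ⟨v, hv, hvB, hvA⟩

/-- If every member of a nonempty family `𝒮` of vertex sets (avoiding `r`) separates
`x` from `r`, then so does the set of those vertices of `⋃ 𝒮` that are separated
from `r` by every member of `𝒮`. -/
theorem stmt12 {V : Type u} (E : Set (V × V)) (r x : V) (hx : x ≠ r)
    (𝒮 : Set (Set V)) (hne : 𝒮.Nonempty)
    (h𝒮 : ∀ S ∈ 𝒮, r ∉ S ∧ SeparatesFrom E r S x) :
    SeparatesFrom E r {s | s ∈ ⋃₀ 𝒮 ∧ ∀ S ∈ 𝒮, SeparatesFrom E r S s} x :=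
  stmt12_general E r x 𝒮 hne h𝒮
end
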